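/- With the notation as defined, for any γ ∈ (0,1) one has Σ_{v ∈ 𝓜} f(v)² Σ_{p | v} 1/(f(p) p^σ) ≥ γ · Σ_{v ∈ 𝓛} f(v)² · e^{−2σ}/√|log(2σ−1)| · (log N)^{1−σ}/(log log N)^σ, where the inner sum runs over primes p dividing v. -/
import Mathlib


open Real Complex Set MeasureTheory Filter intervalIntegral
open scoped Classical

noncomputable section

/-- `P`: the set of primes in `(e·log N·log log N, e²·log N·log log N]`. -/
def Pset (N : ℕ) : Set ℕ :=
  {p : ℕ | p.Prime ∧ Real.exp 1 * Real.log N * Real.log (Real.log N) < (p : ℝ) ∧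
    (p : ℝ) ≤ Real.exp 2 * Real.log N * Real.log (Real.log N)}

/-- `f`: the multiplicative function supported on squarefree integers with all prime factors
in `P`, with `f p = 1/√|log(2σ-1)|` on such primes. -/
def ff (σ : ℝ) (N : ℕ) (n : ℕ) : ℝ :=
  if Squarefree n ∧ ∀ p ∈ n.primeFactors, p ∈ Pset N then
    (1 / Real.sqrt |Real.log (2 * σ - 1)|) ^ n.primeFactors.card
  else 0

/-- `M`: positive integers with at least `a log N / |log(2σ-1)|` prime factors in `P`. -/
def Mset (σ a : ℝ) (N : ℕ) : Set ℕ :=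
  {m : ℕ | 0 < m ∧
    a * Real.log N / |Real.log (2 * σ - 1)| ≤
      ((m.primeFactors.filter fun p => p ∈ Pset N).card : ℝ)}

/-- `𝓜 = supp f \ M`. -/
def calM (σ a : ℝ) (N : ℕ) : Set ℕ := {m : ℕ | ff σ N m ≠ 0} \ Mset σ a N

/-- `𝓙`: indices `j` with `[(1+T⁻¹)^j, (1+T⁻¹)^{j+1}) ∩ 𝓜 ≠ ∅`. -/
def calJ (σ a : ℝ) (N : ℕ) (T : ℝ) : Set ℤ :=
  {j : ℤ | ∃ m ∈ calM σ a N, ((1 + T⁻¹) ^ j ≤ (m : ℝ) ∧ (m : ℝ) < (1 + T⁻¹) ^ (j + 1))}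

/-- `m_j`: the least element of `[(1+T⁻¹)^j, (1+T⁻¹)^{j+1}) ∩ 𝓜`. -/
def mj (σ a : ℝ) (N : ℕ) (T : ℝ) (j : ℤ) : ℕ :=
  sInf {m : ℕ | m ∈ calM σ a N ∧ (1 + T⁻¹) ^ j ≤ (m : ℝ) ∧ (m : ℝ) < (1 + T⁻¹) ^ (j + 1)}

/-- `𝓜' = {m_j : j ∈ 𝓙}`. -/
def calM' (σ a : ℝ) (N : ℕ) (T : ℝ) : Set ℕ := mj σ a N T '' calJ σ a N T

/-- `r(m_j) = (Σ_{n ∈ 𝓜, (1-T⁻¹)^{j-1} ≤ n ≤ (1+T⁻¹)^{j+2}} f(n)²)^{1/2}`; here the index `j`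
of `m = m_j ∈ [(1+T⁻¹)^j, (1+T⁻¹)^{j+1})` is recovered as `⌊log m / log (1+T⁻¹)⌋`. -/
def rr (σ a : ℝ) (N : ℕ) (T : ℝ) (m : ℕ) : ℝ :=
  Real.sqrt (∑' n : ℕ,
    Set.indicator {n : ℕ | n ∈ calM σ a N ∧
        (1 - T⁻¹) ^ (⌊Real.log m / Real.log (1 + T⁻¹)⌋ - 1) ≤ (n : ℝ) ∧
        (n : ℝ) ≤ (1 + T⁻¹) ^ (⌊Real.log m / Real.log (1 + T⁻¹)⌋ + 2)}
      (fun n => ff σ N n ^ 2) n)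

/-- The resonator `R(t) = Σ_{m ∈ 𝓜'} r(m) m^{-it}`. -/
def RR (σ a : ℝ) (N : ℕ) (T : ℝ) (t : ℝ) : ℂ :=
  ∑' m : ℕ, Set.indicator (calM' σ a N T)
    (fun m => ((rr σ a N T m : ℝ) : ℂ) * (m : ℂ) ^ (-(t : ℂ) * Complex.I)) m

/-- The Gaussian `Φ(t) = e^{-t²/2}`. -/
def Phi (t : ℝ) : ℝ := Real.exp (-t^2 / 2)

/-- `L`: positive integers with at most `γ log N / |log(2σ-1)|` prime factors in `P`. -/
def Lset (σ γ : ℝ) (N : ℕ) : Set ℕ :=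
  {m : ℕ | 0 < m ∧
    ((m.primeFactors.filter fun p => p ∈ Pset N).card : ℝ) ≤
      γ * Real.log N / |Real.log (2 * σ - 1)|}

/-- `𝓛 = 𝓜 \ L`. -/
def calL (σ a γ : ℝ) (N : ℕ) : Set ℕ := calM σ a N \ Lset σ γ N


lemma ff_ne_zero_cond {σ : ℝ} {N n : ℕ} (h : ff σ N n ≠ 0) :
    Squarefree n ∧ ∀ p ∈ n.primeFactors, p ∈ Pset N := by
  by_contra hc
  exact h (by simp only [ff]; rw [if_neg hc])

lemma ff_support_finite (σ : ℝ) (N : ℕ) : {n : ℕ | ff σ N n ≠ 0}.Finite := by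
  set B := ⌈Real.exp 2 * Real.log N * Real.log (Real.log N)⌉₊ with hB
  apply Set.Finite.subset (Set.finite_Iic (∏ i ∈ Finset.Icc 1 B, i))
  intro n hn
  obtain ⟨hsq, hP⟩ := ff_ne_zero_cond hn
  have hsub : n.primeFactors ⊆ Finset.Icc 1 B := by
    intro p hp
    have hpP := hP p hp
    have hple : (p : ℝ) ≤ (B : ℝ) := le_trans hpP.2.2 (Nat.le_ceil _)
    exact Finset.mem_Icc.mpr ⟨hpP.1.one_lt.le, by exact_mod_cast hple⟩
  have : n = ∏ p ∈ n.primeFactors, p := (Nat.prod_primeFactors_of_squarefree hsq).symm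
  rw [Set.mem_Iic, this]
  exact Finset.prod_le_prod_of_subset_of_one_le' hsub
    (fun i hi _ => (Finset.mem_Icc.mp hi).1)

/-- **Lemma 3.10**: with `N = ⌊T^κ⌋`, for any `γ ∈ (0,1)`,
`Σ_{v ∈ 𝓜} f(v)² Σ_{p ∣ v} 1/(f(p) p^σ)
  ≥ γ Σ_{v ∈ 𝓛} f(v)² e^{-2σ}/√|log(2σ-1)| (log N)^{1-σ}/(log log N)^σ`. -/
theorem divisor_sum_lower_bound (σ β κ a γ : ℝ) (hσ : σ ∈ Set.Ioo (1/2 : ℝ) 1)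
    (hβ : β ∈ Set.Ioo (0 : ℝ) 1) (hκ : 0 < κ) (hκ' : κ < min (σ - 1/2) (1 - β))
    (ha : 1 < a) (hγ : γ ∈ Set.Ioo (0 : ℝ) 1) :
    ∃ T₀ : ℝ, ∀ T : ℝ, T₀ ≤ T →
      (∑' v : ℕ, Set.indicator (calM σ a ⌊T ^ κ⌋₊) (fun v =>
          ff σ ⌊T ^ κ⌋₊ v ^ 2 *
            ∑ p ∈ v.primeFactors, 1 / (ff σ ⌊T ^ κ⌋₊ p * (p : ℝ) ^ σ)) v) ≥
        γ * (∑' v : ℕ, Set.indicator (calL σ a γ ⌊T ^ κ⌋₊)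
              (fun v => ff σ ⌊T ^ κ⌋₊ v ^ 2) v) *
          (Real.exp (-2 * σ) / Real.sqrt |Real.log (2 * σ - 1)|) *
          ((Real.log (⌊T ^ κ⌋₊ : ℝ)) ^ (1 - σ) /
            (Real.log (Real.log (⌊T ^ κ⌋₊ : ℝ))) ^ σ) := by
  obtain ⟨hσ1, hσ2⟩ := hσ
  obtain ⟨hγ0, hγ1⟩ := hγ
  have h2σ1 : 0 < 2 * σ - 1 := by linarith
  have h2σ2 : 2 * σ - 1 < 1 := by linarith
  have hlogneg : Real.log (2 * σ - 1) < 0 := Real.log_neg h2σ1 h2σ2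
  have hL2 : 0 < |Real.log (2 * σ - 1)| := abs_pos.mpr hlogneg.ne
  set L2 := |Real.log (2 * σ - 1)| with hL2def
  set s := Real.sqrt L2 with hsdef
  have hs : 0 < s := Real.sqrt_pos.mpr hL2
  have hκ0 : κ ≠ 0 := hκ.ne'
  refine ⟨(3 : ℝ) ^ (1 / κ), fun T hT => ?_⟩
  set N := ⌊T ^ κ⌋₊ with hNdef
  have hT0 : 0 < (3 : ℝ) ^ (1 / κ) := Real.rpow_pos_of_pos (by norm_num) _
  have hTκ : (3 : ℝ) ≤ T ^ κ := by
    calc (3 : ℝ) = ((3 : ℝ) ^ (1 / κ)) ^ κ := by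
          rw [← Real.rpow_mul (by norm_num : (0:ℝ) ≤ 3), one_div_mul_cancel hκ0,
            Real.rpow_one]
      _ ≤ T ^ κ := Real.rpow_le_rpow hT0.le hT hκ.le
  have hN3 : 3 ≤ N := Nat.le_floor (by exact_mod_cast hTκ)
  have hNcast : (3 : ℝ) ≤ (N : ℝ) := by exact_mod_cast hN3
  have hlN : 1 < Real.log N := by
    have h3 : Real.exp 1 < 3 := lt_trans Real.exp_one_lt_d9 (by norm_num)
    calc (1 : ℝ) = Real.log (Real.exp 1) := (Real.log_exp 1).symm
      _ < Real.log 3 := Real.log_lt_log (Real.exp_pos 1) h3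
      _ ≤ Real.log N := Real.log_le_log (by norm_num) hNcast
  set lN := Real.log (N : ℝ) with hlNdef
  have hlN0 : (0 : ℝ) < lN := by linarith
  set llN := Real.log lN with hlldef
  have hllN : (0 : ℝ) < llN := Real.log_pos hlN
  set E := Real.exp (2 * σ) with hEdef
  set A := lN ^ σ with hAdef
  set A2 := llN ^ σ with hA2def
  have hE : (0 : ℝ) < E := Real.exp_pos _
  have hA : (0 : ℝ) < A := Real.rpow_pos_of_pos hlN0 σ
  have hA2 : (0 : ℝ) < A2 := Real.rpow_pos_of_pos hllN σ
  have hBσ : (Real.exp 2 * lN * llN) ^ σ = E * A * A2 := by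
    rw [Real.mul_rpow (by positivity) hllN.le,
      Real.mul_rpow (Real.exp_pos 2).le hlN0.le,
      Real.rpow_def_of_pos (Real.exp_pos 2), Real.log_exp]
  set c1 := Real.exp (-2 * σ) / s with hc1def
  set c2 := lN ^ (1 - σ) / A2 with hc2def
  have halg : γ * lN / L2 * (s / (E * A * A2)) = γ * c1 * c2 := by
    have h1 : Real.exp (-2 * σ) = E⁻¹ := by
      rw [hEdef, ← Real.exp_neg]; ring_nf
    have h2 : lN ^ (1 - σ) = lN / A := by
      rw [Real.rpow_sub hlN0, Real.rpow_one, hAdef]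
    have h3 : s * s = L2 := Real.mul_self_sqrt hL2.le
    rw [hc1def, hc2def, h1, h2, ← h3]
    field_simp
  -- useful: value of ff on primes dividing a support element
  have hffp : ∀ v : ℕ, ff σ N v ≠ 0 → ∀ p ∈ v.primeFactors, ff σ N p = 1 / s := by
    intro v hv p hp
    obtain ⟨hsq, hP⟩ := ff_ne_zero_cond hv
    have hpP := hP p hp
    have hpp : p.Prime := hpP.1
    have hcond : Squarefree p ∧ ∀ q ∈ p.primeFactors, q ∈ Pset N := by
      refine ⟨hpp.squarefree, fun q hq => ?_⟩
      rw [hpp.primeFactors, Finset.mem_singleton] at hq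
      subst hq; exact hpP
    simp [ff, hcond, hpp.primeFactors, hsdef, hL2def]
  -- nonnegativity of the calM summand
  have inner_nonneg : ∀ v : ℕ,
      0 ≤ Set.indicator (calM σ a N) (fun v =>
        ff σ N v ^ 2 * ∑ p ∈ v.primeFactors, 1 / (ff σ N p * (p : ℝ) ^ σ)) v := by
    intro v
    by_cases hv : v ∈ calM σ a N
    · rw [Set.indicator_of_mem hv]
      apply mul_nonneg (sq_nonneg _)
      apply Finset.sum_nonneg
      intro p hp
      rw [hffp v hv.1 p hp]
      have hpp : (0:ℝ) < p := by
        exact_mod_cast ((ff_ne_zero_cond hv.1).2 p hp).1.pos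
      positivity
    · rw [Set.indicator_of_notMem hv]
  -- the key pointwise bound on calL
  have key : ∀ v ∈ calL σ a γ N,
      ff σ N v ^ 2 * (γ * c1 * c2) ≤
        ff σ N v ^ 2 * ∑ p ∈ v.primeFactors, 1 / (ff σ N p * (p : ℝ) ^ σ) := by
    intro v hv
    obtain ⟨hvM, hvL⟩ := hv
    have hff := hvM.1
    obtain ⟨hsq, hP⟩ := ff_ne_zero_cond hff
    have hvpos : 0 < v := Nat.pos_of_ne_zero (by
      intro h; subst h; exact not_squarefree_zero hsq)
    have hfilter : v.primeFactors.filter (fun p => p ∈ Pset N) = v.primeFactors :=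
      Finset.filter_true_of_mem hP
    have hcard : γ * lN / L2 < (v.primeFactors.card : ℝ) := by
      rw [Lset, Set.mem_setOf_eq, not_and] at hvL
      have := hvL hvpos
      rw [hfilter] at this
      push_neg at this
      exact this
    have hperprime : ∀ p ∈ v.primeFactors,
        s / (E * A * A2) ≤ 1 / (ff σ N p * (p : ℝ) ^ σ) := by
      intro p hp
      rw [hffp v hff p hp]
      have hpP := hP p hp
      have hp2 : (2 : ℝ) ≤ (p : ℝ) := by exact_mod_cast hpP.1.two_le
      have hppos : (0 : ℝ) < (p : ℝ) ^ σ :=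
        Real.rpow_pos_of_pos (by linarith) σ
      have hpσ : (p : ℝ) ^ σ ≤ E * A * A2 := by
        rw [← hBσ]
        exact Real.rpow_le_rpow (by positivity) hpP.2.2 (by linarith)
      have heq : 1 / (1 / s * (p : ℝ) ^ σ) = s / (p : ℝ) ^ σ := by
        field_simp
      rw [heq]
      gcongr
    have hsum : (v.primeFactors.card : ℝ) * (s / (E * A * A2)) ≤
        ∑ p ∈ v.primeFactors, 1 / (ff σ N p * (p : ℝ) ^ σ) := by
      have := Finset.card_nsmul_le_sum v.primeFactors _ _ hperprime
      simpa [nsmul_eq_mul] using this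
    have hchain : γ * c1 * c2 ≤
        ∑ p ∈ v.primeFactors, 1 / (ff σ N p * (p : ℝ) ^ σ) := by
      rw [← halg]
      calc γ * lN / L2 * (s / (E * A * A2))
          ≤ (v.primeFactors.card : ℝ) * (s / (E * A * A2)) := by
            apply mul_le_mul_of_nonneg_right hcard.le
            positivity
        _ ≤ _ := hsum
    exact mul_le_mul_of_nonneg_left hchain (sq_nonneg _)
  rw [ge_iff_le]
  set S := ∑' v : ℕ, Set.indicator (calL σ a γ N) (fun v => ff σ N v ^ 2) v with hSdef
  have hrw : γ * S * c1 * c2 =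
      ∑' v : ℕ, Set.indicator (calL σ a γ N)
        (fun v => ff σ N v ^ 2 * (γ * c1 * c2)) v := by
    rw [show γ * S * c1 * c2 = S * (γ * c1 * c2) by ring, hSdef, ← tsum_mul_right]
    congr 1
    funext v
    by_cases hv : v ∈ calL σ a γ N <;>
      simp [Set.indicator_apply, hv]
  rw [hrw]
  have hfin := ff_support_finite σ N
  have hptwise : ∀ v : ℕ,
      Set.indicator (calL σ a γ N) (fun v => ff σ N v ^ 2 * (γ * c1 * c2)) v ≤
      Set.indicator (calM σ a N) (fun v =>
        ff σ N v ^ 2 * ∑ p ∈ v.primeFactors, 1 / (ff σ N p * (p : ℝ) ^ σ)) v := by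
    intro v
    by_cases hv : v ∈ calL σ a γ N
    · rw [Set.indicator_of_mem hv, Set.indicator_of_mem hv.1]
      exact key v hv
    · rw [Set.indicator_of_notMem hv]
      exact inner_nonneg v
  have hS1 : Summable (fun v : ℕ => Set.indicator (calL σ a γ N)
      (fun v => ff σ N v ^ 2 * (γ * c1 * c2)) v) := by
    apply summable_of_ne_finset_zero (s := hfin.toFinset)
    intro v hv
    apply Set.indicator_of_notMem
    intro hmem
    exact hv (hfin.mem_toFinset.mpr hmem.1.1)
  have hS2 : Summable (fun v : ℕ => Set.indicator (calM σ a N)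
      (fun v => ff σ N v ^ 2 *
        ∑ p ∈ v.primeFactors, 1 / (ff σ N p * (p : ℝ) ^ σ)) v) := by
    apply summable_of_ne_finset_zero (s := hfin.toFinset)
    intro v hv
    apply Set.indicator_of_notMem
    intro hmem
    exact hv (hfin.mem_toFinset.mpr hmem.1)
  exact Summable.tsum_le_tsum hptwise hS1 hS2
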